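/- Let m ≥ 1, let z be a complex number with |z| < 1, and let x_1,…,x_m, y_1,…,y_m be complex numbers of modulus 1. Let X be the m×m matrix with entries X_{ij} = ∑_{k=0}^∞ z^k (x_i^{k} + x_i^{−k})(y_j^{k} + y_j^{−k}) (each entry a convergent series). Then det(X) = ∑_λ z^{|λ|+binom(m,2)} · det_{1≤i,j≤m}( y_j^{λ_i+m−i} + y_j^{−(λ_i+m−i)} ) · det_{1≤i,j≤m}( x_j^{λ_i+m−i} + x_j^{−(λ_i+m−i)} ), where the sum runs over all partitions λ with at most m parts and converges absolutely. -/

import Mathlib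

/-!
Write `X = U V` with the infinite inner index `k ∈ ℕ`, where `U i k = z^k (x_i^k + x_i^{-k})` and
`V k j = y_j^k + y_j^{-k}`. Since `|z| < 1` and `|x_i| = |y_j| = 1`, every entry series converges
absolutely, so the Leibniz expansion of `det X` multiplies out into an absolutely convergent sum
over tuples `k : Fin m → ℕ` of `∏ᵢ U i (k i) · det (V (k i) j)`. Tuples with a repeated entry
contribute zero, and every other tuple is uniquely a strictly decreasing tuple `ν` composed with a
permutation; summing over the permutations gives Cauchy–Binet, `det X = ∑_ν det U_ν · det V_ν`.
Finally `ν = λ + δ` with `δ = (m - 1, …, 1, 0)` matches strictly decreasing tuples with partitions,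
and pulling `z^{ν_j}` out of the columns of `U_ν` gives the factor `z^{|λ| + binom(m, 2)}`.
-/

open Finset Matrix Function Equiv

section ProductOfSeries

variable {R : Type*} [NormedCommRing R] [CompleteSpace R] {β : Type*}

theorem summable_norm_prod_and_hasSum_prod {n : ℕ} {f : Fin n → β → R} {c : Fin n → R}
    (hf : ∀ i, Summable fun k => ‖f i k‖) (hc : ∀ i, HasSum (f i) (c i)) :
    (Summable fun k : Fin n → β => ‖∏ i, f i (k i)‖) ∧
      HasSum (fun k : Fin n → β => ∏ i, f i (k i)) (∏ i, c i) := by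
  induction n with
  | zero => exact ⟨(hasSum_unique _).summable, by simp⟩
  | succ n ih =>
    obtain ⟨htail_norm, htail⟩ := ih (fun i => hf i.succ) (fun i => hc i.succ)
    have hsplit : ∀ p : β × (Fin n → β), ∏ i, f i (Fin.consEquiv (fun _ => β) p i) =
        f 0 p.1 * ∏ i : Fin n, f i.succ (p.2 i) := fun p => by
      simp [Fin.prod_univ_succ, Fin.consEquiv]
    set tail := fun k : Fin n → β => ∏ i : Fin n, f i.succ (k i)
    refine ⟨(Fin.consEquiv fun _ => β).summable_iff.1 ?_,
      (Fin.consEquiv fun _ => β).hasSum_iff.1 ?_⟩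
    · simpa only [comp_def, hsplit] using (hf 0).mul_norm (g := tail) htail_norm
    · rw [Fin.prod_univ_succ]
      simpa only [comp_def, hsplit] using (hc 0).mul (g := tail) htail
        (summable_mul_of_summable_norm (g := tail) (hf 0) htail_norm)

end ProductOfSeries

theorem HasSum.sum_fiberwise_of_injective {E ι α γ : Type*} [SeminormedAddCommGroup E]
    [Fintype γ] {F : ι → E} {a : E} (hFs : HasSum F a) {e : α × γ → ι} (he : Injective e)
    (hF : ∀ k ∉ Set.range e, F k = 0) (hFn : Summable fun k => ‖F k‖) :
    (Summable fun x => ‖∑ c, F (e (x, c))‖) ∧ HasSum (fun x => ∑ c, F (e (x, c))) a := by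
  obtain ⟨s, hs⟩ := hFn.comp_injective he
  refine ⟨?_, ((he.hasSum_iff hF).2 hFs).prod_fiberwise fun x => hasSum_fintype _⟩
  exact (hs.prod_fiberwise fun x => hasSum_fintype _).summable.of_nonneg_of_le
    (fun _ => norm_nonneg _) fun x => norm_sum_le _ _

section StrictAntiTuples

variable {β : Type*} [LinearOrder β] {m : ℕ}

theorem exists_strictAnti_comp_perm_of_injective {k : Fin m → β} (hk : Injective k) :
    ∃ ν : Fin m → β, StrictAnti ν ∧ ∃ σ : Perm (Fin m), k = ν ∘ σ := by
  have hsorted : StrictMono (k ∘ Tuple.sort k) :=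
    (Tuple.monotone_sort k).strictMono_of_injective (hk.comp (Tuple.sort k).injective)
  refine ⟨k ∘ Tuple.sort k ∘ Fin.rev, hsorted.comp_strictAnti Fin.rev_strictAnti,
    Fin.revPerm * (Tuple.sort k)⁻¹, funext fun i => ?_⟩
  simp

theorem injective_strictAnti_comp_perm :
    Injective fun p : {ν : Fin m → β // StrictAnti ν} × Perm (Fin m) => p.1.1 ∘ p.2 := by
  rintro ⟨⟨ν, hν⟩, σ⟩ ⟨⟨ν', hν'⟩, σ'⟩ h
  have hrange : Set.range ν = Set.range ν' := by
    simpa only [Set.range_comp, σ.surjective.range_eq, σ'.surjective.range_eq, Set.image_univ]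
      using congrArg Set.range h
  obtain rfl : ν = ν' := (hν.range_inj hν').1 hrange
  obtain rfl : σ = σ' := Equiv.ext fun i => hν.injective (congrFun h i)
  rfl

end StrictAntiTuples

section CauchyBinet

variable {R : Type*} {β : Type*} {m : ℕ}

theorem prod_mul_det_eq_sum_perm [CommRing R] (U : Fin m → β → R) (V : β → Fin m → R)
    (k : Fin m → β) :
    (∏ i, U i (k i)) * det (of fun i j => V (k i) j) =
      ∑ σ : Perm (Fin m), (Perm.sign σ : R) * ∏ i, U i (k i) * V (k i) (σ i) := by
  rw [← det_transpose, det_apply', mul_sum]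
  refine sum_congr rfl fun σ _ => ?_
  simp only [transpose_apply, of_apply, prod_mul_distrib]
  ring

theorem sum_perm_prod_mul_det_comp [CommRing R] (U : Fin m → β → R) (V : β → Fin m → R)
    (ν : Fin m → β) :
    ∑ σ : Perm (Fin m), (∏ i, U i (ν (σ i))) * det (of fun i j => V (ν (σ i)) j) =
      det (of fun i j => U i (ν j)) * det (of fun i j => V (ν i) j) := by
  have hpermute : ∀ σ : Perm (Fin m), det (of fun i j => V (ν (σ i)) j) =
      Perm.sign σ * det (of fun i j => V (ν i) j) := fun σ =>
    det_permute σ (of fun i j => V (ν i) j)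
  simp only [hpermute, ← mul_assoc, ← sum_mul]
  rw [← det_transpose (of fun i j => U i (ν j)), det_apply' (of fun i j => U i (ν j))ᵀ]
  congr 1
  refine sum_congr rfl fun σ _ => ?_
  simp only [transpose_apply, of_apply]
  ring

variable [NormedCommRing R] [CompleteSpace R] {U : Fin m → β → R} {V : β → Fin m → R}
  {X : Matrix (Fin m) (Fin m) R}

theorem summable_norm_and_hasSum_prod_mul_det
    (hUV : ∀ i j, Summable fun k => ‖U i k * V k j‖)
    (hX : ∀ i j, HasSum (fun k => U i k * V k j) (X i j)) :
    (Summable fun k : Fin m → β => ‖(∏ i, U i (k i)) * det (of fun i j => V (k i) j)‖) ∧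
      HasSum (fun k : Fin m → β => (∏ i, U i (k i)) * det (of fun i j => V (k i) j)) X.det := by
  have hperm (σ : Perm (Fin m)) := summable_norm_prod_and_hasSum_prod
    (fun i => hUV i (σ i)) (fun i => hX i (σ i))
  simp only [prod_mul_det_eq_sum_perm]
  constructor
  · refine (summable_sum (s := univ) fun σ _ =>
        (hperm σ).1.mul_left ‖(Perm.sign σ : R)‖).of_nonneg_of_le (fun _ => norm_nonneg _)
      fun k => (norm_sum_le _ _).trans (sum_le_sum fun σ _ => norm_mul_le _ _)
  · rw [← det_transpose, det_apply']
    exact hasSum_sum fun σ _ => (hperm σ).2.mul_left _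

/-- Cauchy–Binet for an infinite inner index. -/
theorem summable_norm_and_hasSum_det_mul_det [LinearOrder β]
    (hUV : ∀ i j, Summable fun k => ‖U i k * V k j‖)
    (hX : ∀ i j, HasSum (fun k => U i k * V k j) (X i j)) :
    (Summable fun ν : {ν : Fin m → β // StrictAnti ν} =>
        ‖det (of fun i j => U i (ν.1 j)) * det (of fun i j => V (ν.1 i) j)‖) ∧
      HasSum (fun ν : {ν : Fin m → β // StrictAnti ν} =>
        det (of fun i j => U i (ν.1 j)) * det (of fun i j => V (ν.1 i) j)) X.det := by
  obtain ⟨hnorm, hsum⟩ := summable_norm_and_hasSum_prod_mul_det hUV hX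
  have hzero : ∀ k ∉ Set.range fun p : {ν : Fin m → β // StrictAnti ν} × Perm (Fin m) =>
      p.1.1 ∘ p.2, (∏ i, U i (k i)) * det (of fun i j => V (k i) j) = 0 := by
    intro k hk
    have hnotinj : ¬ Injective k := fun hinj => hk <| by
      obtain ⟨ν, hν, σ, rfl⟩ := exists_strictAnti_comp_perm_of_injective hinj
      exact ⟨(⟨ν, hν⟩, σ), rfl⟩
    obtain ⟨i, j, hkij, hij⟩ := not_injective_iff.1 hnotinj
    rw [det_zero_of_row_eq hij (funext fun _ => by simp [hkij]), mul_zero]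
  simpa only [Function.comp_apply, sum_perm_prod_mul_det_comp] using
    hsum.sum_fiberwise_of_injective injective_strictAnti_comp_perm hzero hnorm

end CauchyBinet

section Staircase

def staircase (m : ℕ) (i : Fin m) : ℕ := m - 1 - i

variable {m : ℕ}

theorem staircase_le_of_strictAnti {ν : Fin m → ℕ} (hν : StrictAnti ν) (i : Fin m) :
    staircase m i ≤ ν i := by
  cases m with
  | zero => exact i.elim0
  | succ n =>
    induction i using Fin.reverseInduction with
    | last => simp [staircase]
    | cast i ih =>
      have := Fin.strictAnti_iff_succ_lt.1 hν i
      simp only [staircase, Fin.val_succ, Fin.val_castSucc] at ih ⊢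
      omega

theorem strictAnti_add_staircase_iff {l : Fin m → ℕ} :
    StrictAnti (l + staircase m) ↔ Antitone l := by
  cases m with
  | zero => exact ⟨fun _ => Subsingleton.antitone l, fun _ => Subsingleton.strictAnti _⟩
  | succ n =>
    rw [Fin.strictAnti_iff_succ_lt, Fin.antitone_iff_succ_le]
    refine forall_congr' fun i => ?_
    have := i.isLt
    simp only [Pi.add_apply, staircase, Fin.val_succ, Fin.val_castSucc]
    omega

def antitoneEquivStrictAnti (m : ℕ) :
    {l : Fin m → ℕ // Antitone l} ≃ {ν : Fin m → ℕ // StrictAnti ν} where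
  toFun l := ⟨l.1 + staircase m, strictAnti_add_staircase_iff.2 l.2⟩
  invFun ν := ⟨ν.1 - staircase m, strictAnti_add_staircase_iff.1 <| by
    rw [tsub_add_cancel_of_le fun i => staircase_le_of_strictAnti ν.2 i]; exact ν.2⟩
  left_inv l := Subtype.ext (add_tsub_cancel_right _ _)
  right_inv ν := Subtype.ext (tsub_add_cancel_of_le fun i => staircase_le_of_strictAnti ν.2 i)

theorem sum_staircase : ∑ i, staircase m i = m.choose 2 := by
  simp only [staircase]
  rw [Fin.sum_univ_eq_sum_range (fun i => m - 1 - i), sum_range_reflect (fun i => i) m,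
    sum_range_id, Nat.choose_two_right]

theorem natCast_add_staircase (l : Fin m → ℕ) (i : Fin m) :
    ((l i + staircase m i : ℕ) : ℤ) = l i + m - 1 - i := by
  have := i.isLt
  simp only [staircase]
  omega

end Staircase

theorem norm_zpow_add_zpow_neg_le_two {𝕜 : Type*} [NormedDivisionRing 𝕜] {w : 𝕜} (hw : ‖w‖ = 1)
    (n : ℤ) : ‖w ^ n + w ^ (-n)‖ ≤ 2 :=
  (norm_add_le _ _).trans_eq (by simp [norm_zpow, hw]; norm_num)

theorem det_mul_det_add_staircase {𝕜 : Type*} [Field 𝕜] {m : ℕ} (z : 𝕜) (x y : Fin m → 𝕜)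
    (l : Fin m → ℕ) :
    det (of fun i j => z ^ (l + staircase m) j *
        (x i ^ ((l + staircase m) j : ℤ) + x i ^ (-((l + staircase m) j : ℤ)))) *
      det (of fun i j => y j ^ ((l + staircase m) i : ℤ) + y j ^ (-((l + staircase m) i : ℤ))) =
    z ^ (∑ i, l i + m.choose 2) *
      det (fun i j : Fin m => y j ^ ((l i : ℤ) + (m : ℤ) - 1 - (i : ℕ)) +
        y j ^ (-((l i : ℤ) + (m : ℤ) - 1 - (i : ℕ)))) *
      det (fun i j : Fin m => x j ^ ((l i : ℤ) + (m : ℤ) - 1 - (i : ℕ)) +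
        x j ^ (-((l i : ℤ) + (m : ℤ) - 1 - (i : ℕ)))) := by
  have hrow := det_mul_row (fun j => z ^ (l + staircase m) j)
    (of fun i j => x i ^ ((l + staircase m) j : ℤ) + x i ^ (-((l + staircase m) j : ℤ)))
  simp only [of_apply] at hrow
  rw [hrow, prod_pow_eq_pow_sum, ← det_transpose]
  simp only [Pi.add_apply, sum_add_distrib, sum_staircase, natCast_add_staircase]
  rw [mul_right_comm]
  rfl

theorem det_expansion_SO_even_general (m : ℕ) (z : ℂ) (hz : ‖z‖ < 1)
    (x y : Fin m → ℂ) (hx : ∀ i, ‖x i‖ = 1) (hy : ∀ i, ‖y i‖ = 1)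
    (X : Matrix (Fin m) (Fin m) ℂ)
    (hX : ∀ i j, HasSum
      (fun k : ℕ =>
        z ^ k * (x i ^ (k : ℤ) + x i ^ (-(k : ℤ))) * (y j ^ (k : ℤ) + y j ^ (-(k : ℤ))))
      (X i j)) :
    Summable
      (fun l : {l : Fin m → ℕ // Antitone l} =>
        ‖(z ^ (∑ i, l.1 i + m.choose 2) *
            Matrix.det (fun i j : Fin m =>
              y j ^ ((l.1 i : ℤ) + (m : ℤ) - 1 - (i : ℕ)) +
                y j ^ (-((l.1 i : ℤ) + (m : ℤ) - 1 - (i : ℕ)))) *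
            Matrix.det (fun i j : Fin m =>
              x j ^ ((l.1 i : ℤ) + (m : ℤ) - 1 - (i : ℕ)) +
                x j ^ (-((l.1 i : ℤ) + (m : ℤ) - 1 - (i : ℕ)))))‖) ∧
    HasSum
      (fun l : {l : Fin m → ℕ // Antitone l} =>
        z ^ (∑ i, l.1 i + m.choose 2) *
          Matrix.det (fun i j : Fin m =>
            y j ^ ((l.1 i : ℤ) + (m : ℤ) - 1 - (i : ℕ)) +
              y j ^ (-((l.1 i : ℤ) + (m : ℤ) - 1 - (i : ℕ)))) *
          Matrix.det (fun i j : Fin m =>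
            x j ^ ((l.1 i : ℤ) + (m : ℤ) - 1 - (i : ℕ)) +
              x j ^ (-((l.1 i : ℤ) + (m : ℤ) - 1 - (i : ℕ)))))
      (Matrix.det X) := by
  have hentry (i j : Fin m) : Summable fun k : ℕ =>
      ‖z ^ k * (x i ^ (k : ℤ) + x i ^ (-(k : ℤ))) * (y j ^ (k : ℤ) + y j ^ (-(k : ℤ)))‖ := by
    refine ((summable_geometric_of_lt_one (norm_nonneg z) hz).mul_right 4).of_nonneg_of_le
      (fun _ => norm_nonneg _) fun k => ?_
    rw [norm_mul, norm_mul, norm_pow, mul_assoc]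
    gcongr
    exact (mul_le_mul (norm_zpow_add_zpow_neg_le_two (hx i) k)
      (norm_zpow_add_zpow_neg_le_two (hy j) k) (norm_nonneg _) zero_le_two).trans_eq (by norm_num)
  obtain ⟨hnorm, hsum⟩ := summable_norm_and_hasSum_det_mul_det hentry hX
  have hterm (l : {l : Fin m → ℕ // Antitone l}) := det_mul_det_add_staircase z x y l.1
  exact ⟨((antitoneEquivStrictAnti m).summable_iff.2 hnorm).congr fun l =>
      congrArg norm (hterm l),
    ((antitoneEquivStrictAnti m).hasSum_iff.2 hsum).congr_fun fun l => (hterm l).symm⟩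

/-- determinant-expansion step for SO(2m). The sum over partitions with
at most `m` parts (antitone functions `Fin m → ℕ`) converges absolutely to `det X`. -/
theorem det_expansion_SO_even (m : ℕ) (hm : 1 ≤ m) (z : ℂ) (hz : ‖z‖ < 1)
    (x y : Fin m → ℂ) (hx : ∀ i, ‖x i‖ = 1) (hy : ∀ i, ‖y i‖ = 1)
    (X : Matrix (Fin m) (Fin m) ℂ)
    (hX : ∀ i j, HasSum
      (fun k : ℕ =>
        z ^ k * (x i ^ (k : ℤ) + x i ^ (-(k : ℤ))) * (y j ^ (k : ℤ) + y j ^ (-(k : ℤ))))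
      (X i j)) :
    Summable
      (fun l : {l : Fin m → ℕ // Antitone l} =>
        ‖(z ^ (∑ i, l.1 i + m.choose 2) *
            Matrix.det (fun i j : Fin m =>
              y j ^ ((l.1 i : ℤ) + (m : ℤ) - 1 - (i : ℕ)) +
                y j ^ (-((l.1 i : ℤ) + (m : ℤ) - 1 - (i : ℕ)))) *
            Matrix.det (fun i j : Fin m =>
              x j ^ ((l.1 i : ℤ) + (m : ℤ) - 1 - (i : ℕ)) +
                x j ^ (-((l.1 i : ℤ) + (m : ℤ) - 1 - (i : ℕ)))))‖) ∧
    HasSum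
      (fun l : {l : Fin m → ℕ // Antitone l} =>
        z ^ (∑ i, l.1 i + m.choose 2) *
          Matrix.det (fun i j : Fin m =>
            y j ^ ((l.1 i : ℤ) + (m : ℤ) - 1 - (i : ℕ)) +
              y j ^ (-((l.1 i : ℤ) + (m : ℤ) - 1 - (i : ℕ)))) *
          Matrix.det (fun i j : Fin m =>
            x j ^ ((l.1 i : ℤ) + (m : ℤ) - 1 - (i : ℕ)) +
              x j ^ (-((l.1 i : ℤ) + (m : ℤ) - 1 - (i : ℕ)))))
      (Matrix.det X) :=
  det_expansion_SO_even_general m z hz x y hx hy X hX
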